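/- Let △ be a continuous t-norm on I = [0,1] and ⋆ a binary operation on I. If the convolution ⋏ is a t-norm on L, then ⋆ is a t-norm on I, i.e., ⋆ is commutative, associative, increasing in each argument, and has 1 as neutral element. -/
import Mathlib


open unitInterval

noncomputable section

instance : Fact ((0:ℝ) ≤ 1) := ⟨zero_le_one⟩

/-- A function `f : I → I` is normal if `sup {f x : x ∈ I} = 1`. -/
def IsNormal (f : I → I) : Prop := sSup (Set.range f) = 1

/-- A function `f : I → I` is convex if `f y ≥ min (f x) (f z)` whenever `x ≤ y ≤ z`. -/
def IsConvexFn (f : I → I) : Prop :=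
  ∀ x y z : I, x ≤ y → y ≤ z → min (f x) (f z) ≤ f y

/-- Membership in `L`, the set of normal convex functions from `I` to `I`. -/
def InL (f : I → I) : Prop := IsNormal f ∧ IsConvexFn f

/-- A t-norm on `I`: commutative, associative, increasing in each argument,
with neutral element `1`. -/
def IsTnorm (op : I → I → I) : Prop :=
  (∀ x y : I, op x y = op y x) ∧
  (∀ x y z : I, op (op x y) z = op x (op y z)) ∧
  (∀ y : I, Monotone fun x => op x y) ∧
  (∀ x : I, Monotone fun y => op x y) ∧
  (∀ x : I, op 1 x = x) ∧ (∀ x : I, op x 1 = x)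

/-- A t-conorm on `I`: commutative, associative, increasing in each argument,
with neutral element `0`. -/
def IsTconorm (op : I → I → I) : Prop :=
  (∀ x y : I, op x y = op y x) ∧
  (∀ x y z : I, op (op x y) z = op x (op y z)) ∧
  (∀ y : I, Monotone fun x => op x y) ∧
  (∀ x : I, Monotone fun y => op x y) ∧
  (∀ x : I, op 0 x = x) ∧ (∀ x : I, op x 0 = x)

/-- Continuity of a binary operation on `I`, as a map `I × I → I`. -/
def IsCont (op : I → I → I) : Prop := Continuous fun p : I × I => op p.1 p.2

/-- The convolution `(f ⋏ g)(x) = sup {f y ⋆ g z : y △ z = x}` (`star` playing the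
role of `⋆` and `tri` the role of `△`); the sup of the empty set is `0`. -/
def conv (star tri : I → I → I) (f g : I → I) : I → I :=
  fun x => sSup {a : I | ∃ y z : I, tri y z = x ∧ a = star (f y) (g z)}

/-- The meet `(f ⊓ g)(x) = sup {min (f y) (g z) : min y z = x}`. -/
def fmeet (f g : I → I) : I → I :=
  fun x => sSup {a : I | ∃ y z : I, min y z = x ∧ a = min (f y) (g z)}

/-- The partial order `f ⊑ g` iff `f ⊓ g = f`. -/
def sqle (f g : I → I) : Prop := fmeet f g = f

/-- The characteristic function `χ_{x}` of the singleton `{x}`. -/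
def chi (x : I) : I → I := fun t => if t = x then 1 else 0

/-- A binary operation `C` on functions is a t-norm on `L` if `L` is closed under `C` and,
on `L`, `C` is commutative, associative, has `χ_{1}` as neutral element, and is increasing
in each argument with respect to `⊑`. -/
def IsTnormOnL (C : (I → I) → (I → I) → (I → I)) : Prop :=
  (∀ f g, InL f → InL g → InL (C f g)) ∧
  (∀ f g, InL f → InL g → C f g = C g f) ∧
  (∀ f g h, InL f → InL g → InL h → C (C f g) h = C f (C g h)) ∧
  (∀ f, InL f → C f (chi 1) = f) ∧
  (∀ f g h, InL f → InL g → InL h → sqle g h → sqle (C f g) (C f h))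

/-- A binary operation `C` on functions is a t-conorm on `L` if `L` is closed under `C` and,
on `L`, `C` is commutative, associative, has `χ_{0}` as neutral element, and is increasing
in each argument with respect to `⊑`. -/
def IsTconormOnL (C : (I → I) → (I → I) → (I → I)) : Prop :=
  (∀ f g, InL f → InL g → InL (C f g)) ∧
  (∀ f g, InL f → InL g → C f g = C g f) ∧
  (∀ f g h, InL f → InL g → InL h → C (C f g) h = C f (C g h)) ∧
  (∀ f, InL f → C f (chi 0) = f) ∧
  (∀ f g h, InL f → InL g → InL h → sqle g h → sqle (C f g) (C f h))

/-- `f^L (x) = sup {f y : y ≤ x}`. -/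
def fL (f : I → I) : I → I := fun x => sSup (f '' Set.Iic x)

/-- `f^R (x) = sup {f y : y ≥ x}`. -/
def fR (f : I → I) : I → I := fun x => sSup (f '' Set.Ici x)

/-- The function `V_x (t) = (x - 1) * t + 1`. -/
def Vfn (x : I) : I → I := fun t =>
  ⟨(x.1 - 1) * t.1 + 1, by
    obtain ⟨hx0, hx1⟩ := x.2; obtain ⟨ht0, ht1⟩ := t.2
    constructor <;> nlinarith⟩


-- Auxiliary lemmas

lemma tri_eq_one_iff (tri : I → I → I) (htri : IsTnorm tri) (y z : I) :
    tri y z = 1 ↔ y = 1 ∧ z = 1 := by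
  obtain ⟨_, _, hm1, hm2, h1, h2⟩ := htri
  constructor
  · intro heq
    have hy : tri y z ≤ y := by
      have := hm2 y ((le_one' : z ≤ 1))
      simpa [h2] using this
    have hz : tri y z ≤ z := by
      have := hm1 z ((le_one' : y ≤ 1))
      simpa [h1] using this
    rw [heq] at hy hz
    exact ⟨le_antisymm (le_one y) hy, le_antisymm (le_one z) hz⟩
  · rintro ⟨rfl, rfl⟩; exact h1 1

lemma conv_apply_one (star tri : I → I → I) (htri : IsTnorm tri) (f g : I → I) :
    conv star tri f g 1 = star (f 1) (g 1) := by
  have hset : {a : I | ∃ y z : I, tri y z = 1 ∧ a = star (f y) (g z)}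
      = {star (f 1) (g 1)} := by
    ext a
    constructor
    · rintro ⟨y, z, hyz, rfl⟩
      obtain ⟨hy, hz⟩ := (tri_eq_one_iff tri htri y z).mp hyz
      simp [hy, hz]
    · rintro rfl
      exact ⟨1, 1, (tri_eq_one_iff tri htri 1 1).mpr ⟨rfl, rfl⟩, rfl⟩
  simp only [conv, hset, sSup_singleton]

lemma fmeet_apply_one (f g : I → I) : fmeet f g 1 = min (f 1) (g 1) := by
  have hset : {a : I | ∃ y z : I, min y z = 1 ∧ a = min (f y) (g z)}
      = {min (f 1) (g 1)} := by
    ext a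
    constructor
    · rintro ⟨y, z, hyz, rfl⟩
      have hy : y = 1 := le_antisymm le_one' (hyz ▸ min_le_left y z)
      have hz : z = 1 := le_antisymm le_one' (hyz ▸ min_le_right y z)
      simp [hy, hz]
    · rintro rfl
      exact ⟨1, 1, by simp, rfl⟩
  simp only [fmeet, hset, sSup_singleton]

lemma Vfn_apply_one (x : I) : Vfn x 1 = x := by
  apply Subtype.ext
  simp [Vfn]

lemma Vfn_anti (x : I) : Antitone (Vfn x) := by
  intro a b hab
  have hx : x.1 - 1 ≤ 0 := by have := x.2.2; linarith
  have hab' : (a : ℝ) ≤ b := hab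
  simp only [Vfn, Subtype.mk_le_mk]
  nlinarith

lemma Vfn_mono (x x' : I) (hx : x ≤ x') (t : I) : Vfn x t ≤ Vfn x' t := by
  have hx' : (x : ℝ) ≤ x' := hx
  have ht := t.2.1
  simp only [Vfn, Subtype.mk_le_mk]
  nlinarith

lemma InL_Vfn (x : I) : InL (Vfn x) := by
  constructor
  · apply le_antisymm (sSup_le fun a _ => le_one')
    apply le_sSup
    refine ⟨0, ?_⟩
    apply Subtype.ext
    simp [Vfn]
  · intro a b c hab hbc
    exact le_trans (min_le_right _ _) (Vfn_anti x hbc)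

lemma InL_chi_one : InL (chi 1) := by
  constructor
  · apply le_antisymm (sSup_le fun a _ => le_one')
    apply le_sSup
    exact ⟨1, by simp [chi]⟩
  · intro a b c hab hbc
    by_cases hb : b = 1
    · have hb1 : chi 1 b = 1 := by simp [chi, hb]
      rw [hb1]; exact le_one'
    · have ha : a ≠ 1 := fun ha => hb (le_antisymm le_one' (ha ▸ hab))
      calc min (chi 1 a) (chi 1 c) ≤ chi 1 a := min_le_left _ _
        _ = 0 := by simp [chi, ha]
        _ ≤ chi 1 b := nonneg' 

lemma sqle_Vfn (x x' : I) (hx : x ≤ x') : sqle (Vfn x) (Vfn x') := by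
  funext t
  apply le_antisymm
  · apply sSup_le
    rintro a ⟨y, z, hyz, rfl⟩
    rcases le_total y z with hle | hle
    · rw [min_eq_left hle] at hyz
      subst hyz
      exact min_le_left _ _
    · rw [min_eq_right hle] at hyz
      subst hyz
      exact le_trans (min_le_left _ _) (Vfn_anti x hle)
  · apply le_sSup
    refine ⟨t, t, min_self t, ?_⟩
    rw [min_eq_left (Vfn_mono x x' hx t)]

theorem stmt_9 (star tri : I → I → I) (htri : IsTnorm tri) (htric : IsCont tri)
    (h : IsTnormOnL (conv star tri)) : IsTnorm star := by
  obtain ⟨hcl, hcomm, hassoc, hneut, hmono⟩ := h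
  have hchi1 : chi 1 1 = 1 := by simp [chi]
  have hneut' : ∀ x : I, star x 1 = x := by
    intro x
    have := congrFun (hneut (Vfn x) (InL_Vfn x)) 1
    rwa [conv_apply_one star tri htri, Vfn_apply_one, hchi1] at this
  have hcomm' : ∀ x y : I, star x y = star y x := by
    intro x y
    have := congrFun (hcomm (Vfn x) (Vfn y) (InL_Vfn x) (InL_Vfn y)) 1
    rwa [conv_apply_one star tri htri, conv_apply_one star tri htri,
      Vfn_apply_one, Vfn_apply_one] at this
  have hmono2 : ∀ x : I, Monotone fun y => star x y := by
    intro x a b hab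
    have hs := hmono (Vfn x) (Vfn a) (Vfn b) (InL_Vfn x) (InL_Vfn a) (InL_Vfn b)
      (sqle_Vfn a b hab)
    have := congrFun hs 1
    rw [fmeet_apply_one, conv_apply_one star tri htri, conv_apply_one star tri htri,
      Vfn_apply_one, Vfn_apply_one, Vfn_apply_one] at this
    exact min_eq_left_iff.mp this
  refine ⟨hcomm', ?_, ?_, hmono2, ?_, hneut'⟩
  · intro x y z
    have := congrFun (hassoc (Vfn x) (Vfn y) (Vfn z) (InL_Vfn x) (InL_Vfn y) (InL_Vfn z)) 1
    rwa [conv_apply_one star tri htri, conv_apply_one star tri htri,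
      conv_apply_one star tri htri, conv_apply_one star tri htri,
      Vfn_apply_one, Vfn_apply_one, Vfn_apply_one] at this
  · intro y a b hab
    simp only
    rw [hcomm' a y, hcomm' b y]
    exact hmono2 y hab
  · intro x
    rw [hcomm' 1 x]
    exact hneut' x
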